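/- Under the boundedness assumption |θ_{id}| ≤ C n^{1/4 − η} for all i and d ∈ {1,2}, the regularized oracle rule δ*_ρ with f*_ρ(x1, x2) = x1 + Σ_j (θ_{j1} − x1) p_j^0(x1,x2) / (ρ + Σ_j p_j^0(x1,x2)) satisfies lim_{n→∞} [R_n(θ, δ*_ρ) − R_n(θ, δ*)] = 0, where δ* is the unregularized oracle rule. -/

import Mathlib

open MeasureTheory Real Filter

/-- Standard normal density. -/
noncomputable def gphi (x : ℝ) : ℝ := (Real.sqrt (2 * Real.pi))⁻¹ * Real.exp (-x ^ 2 / 2)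

/-- Joint density of two independent normals with means `(t1, t2)` and
standard deviations `(σ1, σ2)`. -/
noncomputable def pdens (σ1 σ2 t1 t2 x1 x2 : ℝ) : ℝ :=
  gphi ((x1 - t1) / σ1) * gphi ((x2 - t2) / σ2) / (σ1 * σ2)

/-- The unregularized oracle rule `f*`. -/
noncomputable def fstar (n : ℕ) (σ1 σ2 : ℝ) (θ : Fin n → Fin 2 → ℝ) (x1 x2 : ℝ) : ℝ :=
  (∑ j : Fin n, θ j 0 * pdens σ1 σ2 (θ j 0) (θ j 1) x1 x2) /
  (∑ j : Fin n, pdens σ1 σ2 (θ j 0) (θ j 1) x1 x2)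

/-- The regularized oracle rule `f*_ρ`. -/
noncomputable def fstarReg (n : ℕ) (σ1 σ2 ρ : ℝ) (θ : Fin n → Fin 2 → ℝ) (x1 x2 : ℝ) : ℝ :=
  x1 + (∑ j : Fin n, (θ j 0 - x1) * pdens σ1 σ2 (θ j 0) (θ j 1) x1 x2) /
    (ρ + ∑ j : Fin n, pdens σ1 σ2 (θ j 0) (θ j 1) x1 x2)

/-- Risk `R_n(θ, δ)` of the separable rule built from `f`. -/
noncomputable def riskR (n : ℕ) (σ1 σ2 : ℝ) (θ : Fin n → Fin 2 → ℝ) (f : ℝ → ℝ → ℝ) : ℝ :=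
  (n : ℝ)⁻¹ * ∑ i : Fin n, ∫ x : ℝ × ℝ,
    (θ i 0 - f x.1 x.2) ^ 2 * pdens σ1 σ2 (θ i 0) (θ i 1) x.1 x.2

/-!
Write `p_j` for the densities, `G = ∑ j p_j` and `m = f*`, the `p`-weighted mean of the `θ_{j1}`.
The regularized rule is the weighted mean with the observation `x₁` added at weight `ρ`, so
`f*_ρ - m = ρ / (ρ + G) * (x₁ - m)`, and the bias–variance identity turns the difference of risks
into `n⁻¹ ∫ G (ρ / (ρ + G))² (x₁ - m)² ≥ 0`. Let `B ≥ max |θ_{id}|`. On the square `‖x‖ ≤ 2B`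
the integrand is at most `ρ / 4 * (3B)²` (AM–GM); off it, it is at most `∑ j p_j (x₁ - m)²`, and
every `x - θ_j` has norm `> B`, so each term is controlled by `τ(B)`, the second-moment tail of the
centred Gaussian beyond `B`. The difference is thus at most `36 ρ B⁴ / n + 10 τ(B)`, and
`B = C n^{1/4 - min(η, 1/8)}` makes both terms vanish.
-/

open Topology

section WeightedMean

variable {ι : Type*} [Fintype ι] (w θ : ι → ℝ)

noncomputable def weightedMean : ℝ := (∑ i, θ i * w i) / ∑ i, w i

/-- `(ρ x + ∑ i, θ i * w i) / (ρ + ∑ i, w i)`: the weighted mean after adding the point `x`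
with weight `ρ`. -/
noncomputable def regularizedMean (ρ x : ℝ) : ℝ :=
  x + (∑ i, (θ i - x) * w i) / (ρ + ∑ i, w i)

variable {w θ}

theorem sum_sq_sub_mul_eq_add (hw : ∑ i, w i ≠ 0) (c : ℝ) :
    ∑ i, (θ i - c) ^ 2 * w i =
      ∑ i, (θ i - weightedMean w θ) ^ 2 * w i + (∑ i, w i) * (c - weightedMean w θ) ^ 2 := by
  set m := weightedMean w θ
  have hN : ∑ i, θ i * w i = m * ∑ i, w i := (div_mul_cancel₀ _ hw).symm
  have hexpand : ∀ i, (θ i - c) ^ 2 * w i =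
      (θ i - m) ^ 2 * w i + (c - m) ^ 2 * w i - 2 * (c - m) * (θ i * w i - m * w i) :=
    fun i => by ring
  simp only [hexpand, Finset.sum_sub_distrib, Finset.sum_add_distrib, ← Finset.mul_sum, hN]
  ring

theorem regularizedMean_sub_weightedMean (hw : ∑ i, w i ≠ 0) {ρ : ℝ} (hρw : ρ + ∑ i, w i ≠ 0)
    (x : ℝ) :
    regularizedMean w θ ρ x - weightedMean w θ =
      ρ / (ρ + ∑ i, w i) * (x - weightedMean w θ) := by
  have hsum : ∑ i, (θ i - x) * w i = ∑ i, θ i * w i - x * ∑ i, w i := by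
    simp only [sub_mul, Finset.sum_sub_distrib, Finset.mul_sum]
  rw [regularizedMean, weightedMean, hsum]
  field_simp
  ring

theorem abs_weightedMean_le (hw : ∀ i, 0 ≤ w i) (hpos : 0 < ∑ i, w i) {B : ℝ}
    (hθ : ∀ i, |θ i| ≤ B) : |weightedMean w θ| ≤ B := by
  rw [weightedMean, abs_div, abs_of_pos hpos, div_le_iff₀ hpos, Finset.mul_sum]
  calc |∑ i, θ i * w i| ≤ ∑ i, |θ i * w i| := Finset.abs_sum_le_sum_abs _ _
    _ ≤ ∑ i, B * w i := Finset.sum_le_sum fun i _ => by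
      rw [abs_mul, abs_of_nonneg (hw i)]
      exact mul_le_mul_of_nonneg_right (hθ i) (hw i)

theorem sum_sq_sub_regularizedMean_sub (hpos : 0 < ∑ i, w i) {ρ : ℝ} (hρ : 0 ≤ ρ) (x : ℝ) :
    ∑ i, (θ i - regularizedMean w θ ρ x) ^ 2 * w i - ∑ i, (θ i - weightedMean w θ) ^ 2 * w i =
      (∑ i, w i) * (ρ / (ρ + ∑ i, w i)) ^ 2 * (x - weightedMean w θ) ^ 2 := by
  rw [sum_sq_sub_mul_eq_add hpos.ne', regularizedMean_sub_weightedMean hpos.ne' (by positivity)]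
  ring

end WeightedMean

theorem mul_div_add_sq_le_quarter {G ρ : ℝ} (hG : 0 ≤ G) (hρ : 0 < ρ) :
    G * (ρ / (ρ + G)) ^ 2 ≤ ρ / 4 := by
  rw [div_pow, mul_div_assoc', div_le_iff₀ (by positivity)]
  nlinarith [sq_nonneg (ρ - G)]

theorem mul_div_add_sq_le_self {G ρ : ℝ} (hG : 0 ≤ G) (hρ : 0 < ρ) :
    G * (ρ / (ρ + G)) ^ 2 ≤ G := by
  have h : ρ / (ρ + G) ≤ 1 := div_le_one_of_le₀ (by linarith) (by positivity)
  have h0 : 0 ≤ ρ / (ρ + G) := by positivity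
  nlinarith [mul_le_one₀ h h0 h]

theorem sq_add_le_of_lt_norm {w : ℝ × ℝ} {B c : ℝ} (hw : B < ‖w‖) (hc : |c| ≤ 2 * B) :
    (w.1 + c) ^ 2 ≤ 10 * (w.1 ^ 2 + w.2 ^ 2) := by
  have hB2 : B ^ 2 ≤ w.1 ^ 2 + w.2 ^ 2 := by
    rw [Prod.norm_def, Real.norm_eq_abs, Real.norm_eq_abs, lt_max_iff] at hw
    have hB : 0 ≤ B := by linarith [abs_nonneg c]
    rcases hw with hw | hw
    · nlinarith [sq_abs w.1, sq_nonneg w.2]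
    · nlinarith [sq_abs w.2, sq_nonneg w.1]
  nlinarith [sq_abs c, abs_nonneg c, sq_nonneg (w.1 - c)]

theorem volume_real_closedBall_prod (x : ℝ × ℝ) {r : ℝ} (hr : 0 ≤ r) :
    volume.real (Metric.closedBall x r) = (2 * r) ^ 2 := by
  rw [← Prod.mk.eta (p := x), ← closedBall_prod_same, measureReal_def, Measure.volume_eq_prod,
    Measure.prod_prod, Real.volume_closedBall, Real.volume_closedBall,
    ← ENNReal.ofReal_mul (by positivity), ENNReal.toReal_ofReal (by positivity)]
  ring

theorem tendsto_setIntegral_lt_norm {E F : Type*} [NormedAddCommGroup E] [MeasurableSpace E]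
    [OpensMeasurableSpace E] [NormedAddCommGroup F] [NormedSpace ℝ F] {μ : Measure E}
    {f : E → F} (hf : Integrable f μ) :
    Tendsto (fun R : ℝ => ∫ x in {x | R < ‖x‖}, f x ∂μ) atTop (𝓝 0) := by
  have hempty : (⋂ R : ℝ, {x : E | R < ‖x‖}) = ∅ :=
    Set.eq_empty_of_forall_notMem fun x hx => (Set.mem_iInter.1 hx ‖x‖).out.false
  simpa [hempty] using tendsto_setIntegral_of_antitone (s := fun R : ℝ => {x : E | R < ‖x‖})
    (fun R => measurableSet_lt measurable_const measurable_norm)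
    (fun R R' hR x hx => lt_of_le_of_lt hR hx) ⟨0, hf.integrableOn⟩

theorem tendsto_mul_rpow_pow_four_div {a : ℝ} (ha : a < 1 / 4) (c : ℝ) :
    Tendsto (fun n : ℕ => (c * (n : ℝ) ^ a) ^ 4 / n) atTop (𝓝 0) := by
  have hlim := ((tendsto_rpow_neg_atTop (y := 1 - 4 * a) (by linarith)).comp
    tendsto_natCast_atTop_atTop).const_mul (c ^ 4)
  rw [mul_zero] at hlim
  refine hlim.congr' ((eventually_gt_atTop 0).mono fun n hn => ?_)
  have hn' : (n : ℝ) ≠ 0 := Nat.cast_ne_zero.2 hn.ne'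
  show c ^ 4 * (n : ℝ) ^ (-(1 - 4 * a)) = (c * (n : ℝ) ^ a) ^ 4 / n
  rw [mul_pow, ← rpow_mul_natCast (Nat.cast_nonneg n), mul_div_assoc, ← rpow_sub_one hn']
  ring_nf

section Gaussian

theorem gphi_eq_mul_exp (x : ℝ) : gphi x = (√(2 * π))⁻¹ * rexp (-(1 / 2) * x ^ 2) := by
  rw [gphi]; ring_nf

theorem integrable_gphi : Integrable gphi := by
  simpa only [← gphi_eq_mul_exp] using
    (integrable_exp_neg_mul_sq (b := 1 / 2) (by norm_num)).const_mul (√(2 * π))⁻¹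

theorem integrable_sq_mul_gphi : Integrable fun x => x ^ 2 * gphi x := by
  have h := (integrable_rpow_mul_exp_neg_mul_sq (b := 1 / 2) (by norm_num) (s := 2)
    (by norm_num)).const_mul (√(2 * π))⁻¹
  refine h.congr (Eventually.of_forall fun x => ?_)
  simp only [gphi_eq_mul_exp]
  norm_cast
  ring

variable {σ1 σ2 : ℝ}

theorem pdens_pos (hσ1 : 0 < σ1) (hσ2 : 0 < σ2) (t1 t2 x1 x2 : ℝ) :
    0 < pdens σ1 σ2 t1 t2 x1 x2 := by
  unfold pdens gphi
  positivity

theorem pdens_eq_centered (t1 t2 x1 x2 : ℝ) :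
    pdens σ1 σ2 t1 t2 x1 x2 = pdens σ1 σ2 0 0 (x1 - t1) (x2 - t2) := by
  simp only [pdens, sub_zero]

theorem continuous_pdens (t1 t2 : ℝ) :
    Continuous fun x : ℝ × ℝ => pdens σ1 σ2 t1 t2 x.1 x.2 := by
  unfold pdens gphi
  fun_prop

theorem integrable_quadratic_mul_pdens (hσ1 : 0 < σ1) (hσ2 : 0 < σ2) (a b c : ℝ) :
    Integrable fun w : ℝ × ℝ => (a + b * w.1 ^ 2 + c * w.2 ^ 2) * pdens σ1 σ2 0 0 w.1 w.2 := by
  have h0 : ∀ {σ : ℝ}, 0 < σ → Integrable fun u : ℝ => gphi (u / σ) / σ :=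
    fun hσ => (integrable_gphi.comp_div hσ.ne').div_const _
  have h2 : ∀ {σ : ℝ}, 0 < σ → Integrable fun u : ℝ => u ^ 2 * (gphi (u / σ) / σ) := by
    intro σ hσ
    refine ((integrable_sq_mul_gphi.comp_div hσ.ne').const_mul σ).congr
      (Eventually.of_forall fun u => ?_)
    field_simp
  rw [Measure.volume_eq_prod]
  refine ((((h0 hσ1).mul_prod (h0 hσ2)).const_mul a).add
    (((h2 hσ1).mul_prod (h0 hσ2)).const_mul b)).add
    ((((h0 hσ1).mul_prod (h2 hσ2))).const_mul c) |>.congr (Eventually.of_forall fun w => ?_)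
  simp only [Pi.add_apply, pdens, sub_zero]
  ring

theorem integrable_sq_add_sq_mul_pdens (hσ1 : 0 < σ1) (hσ2 : 0 < σ2) :
    Integrable fun w : ℝ × ℝ => (w.1 ^ 2 + w.2 ^ 2) * pdens σ1 σ2 0 0 w.1 w.2 :=
  (integrable_quadratic_mul_pdens hσ1 hσ2 0 1 1).congr
    (Eventually.of_forall fun w => by simp only [zero_add, one_mul])

theorem integrable_sq_sub_mul_pdens (hσ1 : 0 < σ1) (hσ2 : 0 < σ2) {f : ℝ × ℝ → ℝ}
    (hf : Measurable f) {t1 t2 a : ℝ} (hfa : ∀ x : ℝ × ℝ, |t1 - f x| ≤ a + |x.1 - t1|) :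
    Integrable fun x : ℝ × ℝ => (t1 - f x) ^ 2 * pdens σ1 σ2 t1 t2 x.1 x.2 := by
  refine ((integrable_quadratic_mul_pdens hσ1 hσ2 (2 * a ^ 2) 2 0).comp_sub_right (t1, t2)).mono'
    (((hf.const_sub t1).pow_const 2).mul (continuous_pdens t1 t2).measurable).aestronglyMeasurable
    (Eventually.of_forall fun x => ?_)
  have hsq : (t1 - f x) ^ 2 ≤ 2 * a ^ 2 + 2 * (x.1 - t1) ^ 2 := by
    have := pow_le_pow_left₀ (abs_nonneg _) (hfa x) 2
    rw [sq_abs] at this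
    nlinarith [sq_abs (x.1 - t1), sq_nonneg (a - |x.1 - t1|)]
  rw [Real.norm_eq_abs, abs_of_nonneg (by positivity [pdens_pos hσ1 hσ2 t1 t2 x.1 x.2]),
    pdens_eq_centered]
  simp only [Prod.fst_sub, Prod.snd_sub, zero_mul, add_zero]
  exact mul_le_mul_of_nonneg_right hsq (pdens_pos hσ1 hσ2 _ _ _ _).le

end Gaussian

section Risk

variable {σ1 σ2 ρ B : ℝ} {n : ℕ} {θ : Fin n → Fin 2 → ℝ}

theorem measurable_fstar : Measurable fun x : ℝ × ℝ => fstar n σ1 σ2 θ x.1 x.2 := by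
  have := fun t1 t2 => (continuous_pdens (σ1 := σ1) (σ2 := σ2) t1 t2).measurable
  unfold fstar
  fun_prop

theorem measurable_fstarReg : Measurable fun x : ℝ × ℝ => fstarReg n σ1 σ2 ρ θ x.1 x.2 := by
  have := fun t1 t2 => (continuous_pdens (σ1 := σ1) (σ2 := σ2) t1 t2).measurable
  unfold fstarReg
  fun_prop

theorem sum_pdens_pos (hσ1 : 0 < σ1) (hσ2 : 0 < σ2) (hn : 0 < n) (x1 x2 : ℝ) :
    0 < ∑ j, pdens σ1 σ2 (θ j 0) (θ j 1) x1 x2 :=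
  Finset.sum_pos (fun _ _ => pdens_pos hσ1 hσ2 _ _ _ _) ⟨⟨0, hn⟩, Finset.mem_univ _⟩

theorem abs_fstar_le (hσ1 : 0 < σ1) (hσ2 : 0 < σ2) (hn : 0 < n) (hθ : ∀ i d, |θ i d| ≤ B)
    (x1 x2 : ℝ) : |fstar n σ1 σ2 θ x1 x2| ≤ B :=
  abs_weightedMean_le (fun _ => (pdens_pos hσ1 hσ2 _ _ _ _).le) (sum_pdens_pos hσ1 hσ2 hn x1 x2)
    fun j => hθ j 0

theorem abs_sub_fstar_le (hσ1 : 0 < σ1) (hσ2 : 0 < σ2) (hn : 0 < n) (hθ : ∀ i d, |θ i d| ≤ B)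
    (i : Fin n) (x1 x2 : ℝ) : |θ i 0 - fstar n σ1 σ2 θ x1 x2| ≤ 2 * B :=
  (abs_sub _ _).trans (by linarith [hθ i 0, abs_fstar_le hσ1 hσ2 hn hθ x1 x2])

theorem abs_sub_fstarReg_le (hσ1 : 0 < σ1) (hσ2 : 0 < σ2) (hn : 0 < n) (hρ : 0 < ρ)
    (hθ : ∀ i d, |θ i d| ≤ B) (i : Fin n) (x1 x2 : ℝ) :
    |θ i 0 - fstarReg n σ1 σ2 ρ θ x1 x2| ≤ 4 * B + |x1 - θ i 0| := by
  set m := fstar n σ1 σ2 θ x1 x2 with hm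
  have hG := sum_pdens_pos hσ1 hσ2 hn (θ := θ) x1 x2
  have hfrac : |ρ / (ρ + ∑ j, pdens σ1 σ2 (θ j 0) (θ j 1) x1 x2)| ≤ 1 := by
    rw [abs_of_pos (by positivity)]
    exact div_le_one_of_le₀ (by linarith) (by positivity)
  have hshift : |m - fstarReg n σ1 σ2 ρ θ x1 x2| ≤ |x1 - m| := by
    rw [abs_sub_comm, hm, fstarReg, fstar, ← regularizedMean, ← weightedMean,
      regularizedMean_sub_weightedMean hG.ne' (by positivity), abs_mul]
    exact mul_le_of_le_one_left (abs_nonneg _) hfrac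
  have hθm := abs_sub_fstar_le hσ1 hσ2 hn hθ i x1 x2
  calc |θ i 0 - fstarReg n σ1 σ2 ρ θ x1 x2|
      ≤ |θ i 0 - m| + |m - fstarReg n σ1 σ2 ρ θ x1 x2| := abs_sub_le _ _ _
    _ ≤ 2 * B + (|x1 - θ i 0| + |θ i 0 - m|) :=
      add_le_add hθm (hshift.trans (abs_sub_le _ _ _))
    _ ≤ 4 * B + |x1 - θ i 0| := by linarith

/-- The integrand of `n * (riskR fstarReg - riskR fstar)`, in the closed form given by
`sum_sq_sub_regularizedMean_sub`. -/
noncomputable def excessRisk (n : ℕ) (σ1 σ2 ρ : ℝ) (θ : Fin n → Fin 2 → ℝ) (x : ℝ × ℝ) : ℝ :=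
  (∑ j, pdens σ1 σ2 (θ j 0) (θ j 1) x.1 x.2) *
    (ρ / (ρ + ∑ j, pdens σ1 σ2 (θ j 0) (θ j 1) x.1 x.2)) ^ 2 * (x.1 - fstar n σ1 σ2 θ x.1 x.2) ^ 2

theorem riskR_fstarReg_sub_riskR_fstar (hσ1 : 0 < σ1) (hσ2 : 0 < σ2) (hn : 0 < n) (hρ : 0 < ρ)
    (hθ : ∀ i d, |θ i d| ≤ B) :
    riskR n σ1 σ2 θ (fstarReg n σ1 σ2 ρ θ) - riskR n σ1 σ2 θ (fstar n σ1 σ2 θ) =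
      (n : ℝ)⁻¹ * ∫ x, excessRisk n σ1 σ2 ρ θ x := by
  have hreg : ∀ i, Integrable fun x : ℝ × ℝ =>
      (θ i 0 - fstarReg n σ1 σ2 ρ θ x.1 x.2) ^ 2 * pdens σ1 σ2 (θ i 0) (θ i 1) x.1 x.2 :=
    fun i => integrable_sq_sub_mul_pdens hσ1 hσ2 measurable_fstarReg
      fun x => abs_sub_fstarReg_le hσ1 hσ2 hn hρ hθ i x.1 x.2
  have horacle : ∀ i, Integrable fun x : ℝ × ℝ =>
      (θ i 0 - fstar n σ1 σ2 θ x.1 x.2) ^ 2 * pdens σ1 σ2 (θ i 0) (θ i 1) x.1 x.2 :=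
    fun i => integrable_sq_sub_mul_pdens hσ1 hσ2 measurable_fstar fun x =>
      (abs_sub_fstar_le hσ1 hσ2 hn hθ i x.1 x.2).trans (le_add_of_nonneg_right (abs_nonneg _))
  rw [riskR, riskR, ← mul_sub, ← integral_finsetSum _ fun i _ => hreg i,
    ← integral_finsetSum _ fun i _ => horacle i,
    ← integral_sub (integrable_finsetSum _ fun i _ => hreg i)
      (integrable_finsetSum _ fun i _ => horacle i)]
  congr 2 with x
  exact sum_sq_sub_regularizedMean_sub (sum_pdens_pos hσ1 hσ2 hn x.1 x.2) hρ.le x.1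

theorem excessRisk_nonneg (hσ1 : 0 < σ1) (hσ2 : 0 < σ2) (hn : 0 < n) (x : ℝ × ℝ) :
    0 ≤ excessRisk n σ1 σ2 ρ θ x :=
  mul_nonneg (mul_nonneg (sum_pdens_pos hσ1 hσ2 hn x.1 x.2).le (sq_nonneg _)) (sq_nonneg _)

theorem excessRisk_le (hσ1 : 0 < σ1) (hσ2 : 0 < σ2) (hn : 0 < n) (hρ : 0 < ρ)
    (hθ : ∀ i d, |θ i d| ≤ B) (x : ℝ × ℝ) :
    excessRisk n σ1 σ2 ρ θ x ≤
      (Metric.closedBall 0 (2 * B)).indicator (fun _ => ρ / 4 * (3 * B) ^ 2) x +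
        ∑ j, 10 * {w : ℝ × ℝ | B < ‖w‖}.indicator
          (fun w => (w.1 ^ 2 + w.2 ^ 2) * pdens σ1 σ2 0 0 w.1 w.2) (x - (θ j 0, θ j 1)) := by
  rw [excessRisk]
  set G := ∑ j, pdens σ1 σ2 (θ j 0) (θ j 1) x.1 x.2
  set m := fstar n σ1 σ2 θ x.1 x.2
  have hG : 0 < G := sum_pdens_pos hσ1 hσ2 hn x.1 x.2
  have hm : |m| ≤ B := abs_fstar_le hσ1 hσ2 hn hθ x.1 x.2
  by_cases hx : ‖x‖ ≤ 2 * B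
  · have hx1 : |x.1| ≤ 2 * B := (norm_fst_le x).trans hx
    have hsq : (x.1 - m) ^ 2 ≤ (3 * B) ^ 2 :=
      sq_le_sq' (by linarith [neg_abs_le x.1, le_abs_self m])
        (by linarith [le_abs_self x.1, neg_abs_le m])
    rw [Set.indicator_of_mem (mem_closedBall_zero_iff.2 hx)]
    calc G * (ρ / (ρ + G)) ^ 2 * (x.1 - m) ^ 2 ≤ ρ / 4 * (3 * B) ^ 2 :=
          mul_le_mul (mul_div_add_sq_le_quarter hG.le hρ) hsq (sq_nonneg _) (by positivity)
      _ ≤ _ := le_add_of_nonneg_right <| Finset.sum_nonneg fun _ _ =>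
          mul_nonneg (by norm_num) <| Set.indicator_nonneg
            (fun _ _ => mul_nonneg (by positivity) (pdens_pos hσ1 hσ2 _ _ _ _).le) _
  · rw [Set.indicator_of_notMem (by simpa using hx), zero_add]
    calc G * (ρ / (ρ + G)) ^ 2 * (x.1 - m) ^ 2 ≤ G * (x.1 - m) ^ 2 :=
          mul_le_mul_of_nonneg_right (mul_div_add_sq_le_self hG.le hρ) (sq_nonneg _)
      _ = ∑ j, pdens σ1 σ2 (θ j 0) (θ j 1) x.1 x.2 * (x.1 - m) ^ 2 := Finset.sum_mul _ _ _
      _ ≤ _ := Finset.sum_le_sum fun j _ => ?_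
    have hθj : ‖((θ j 0, θ j 1) : ℝ × ℝ)‖ ≤ B := by
      simpa [Prod.norm_def] using And.intro (hθ j 0) (hθ j 1)
    have hfar : x - (θ j 0, θ j 1) ∈ {w : ℝ × ℝ | B < ‖w‖} := by
      have := norm_sub_norm_le x (θ j 0, θ j 1)
      show B < _
      linarith
    rw [Set.indicator_of_mem hfar, pdens_eq_centered]
    have key := sq_add_le_of_lt_norm hfar (c := θ j 0 - m)
      (by linarith [abs_sub (θ j 0) m, hθ j 0])
    simp only [Prod.fst_sub, Prod.snd_sub, sub_add_sub_cancel] at key ⊢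
    nlinarith [pdens_pos hσ1 hσ2 0 0 (x.1 - θ j 0) (x.2 - θ j 1)]

theorem riskR_fstarReg_sub_riskR_fstar_nonneg (hσ1 : 0 < σ1) (hσ2 : 0 < σ2) (hn : 0 < n)
    (hρ : 0 < ρ) (hθ : ∀ i d, |θ i d| ≤ B) :
    0 ≤ riskR n σ1 σ2 θ (fstarReg n σ1 σ2 ρ θ) - riskR n σ1 σ2 θ (fstar n σ1 σ2 θ) := by
  rw [riskR_fstarReg_sub_riskR_fstar hσ1 hσ2 hn hρ hθ]
  exact mul_nonneg (by positivity) (integral_nonneg (excessRisk_nonneg hσ1 hσ2 hn))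

theorem riskR_fstarReg_sub_riskR_fstar_le (hσ1 : 0 < σ1) (hσ2 : 0 < σ2) (hn : 0 < n)
    (hρ : 0 < ρ) (hθ : ∀ i d, |θ i d| ≤ B) :
    riskR n σ1 σ2 θ (fstarReg n σ1 σ2 ρ θ) - riskR n σ1 σ2 θ (fstar n σ1 σ2 θ) ≤
      36 * ρ * B ^ 4 / n +
        10 * ∫ w in {w : ℝ × ℝ | B < ‖w‖}, (w.1 ^ 2 + w.2 ^ 2) * pdens σ1 σ2 0 0 w.1 w.2 := by
  have hB : 0 ≤ B := (abs_nonneg _).trans (hθ ⟨0, hn⟩ 0)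
  set W := fun w : ℝ × ℝ => (w.1 ^ 2 + w.2 ^ 2) * pdens σ1 σ2 0 0 w.1 w.2
  have hW : Integrable W := integrable_sq_add_sq_mul_pdens hσ1 hσ2
  have htail : MeasurableSet {w : ℝ × ℝ | B < ‖w‖} :=
    measurableSet_lt measurable_const measurable_norm
  have hball : Integrable ((Metric.closedBall (0 : ℝ × ℝ) (2 * B)).indicator
      fun _ => ρ / 4 * (3 * B) ^ 2) :=
    (integrable_indicator_iff Metric.isClosed_closedBall.measurableSet).2
      (integrableOn_const measure_closedBall_lt_top.ne)
  have hfar : ∀ j : Fin n, Integrable fun x : ℝ × ℝ =>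
      10 * {w : ℝ × ℝ | B < ‖w‖}.indicator W (x - (θ j 0, θ j 1)) :=
    fun j => ((hW.indicator htail).comp_sub_right _).const_mul 10
  have hbound := integral_mono_of_nonneg
    (Eventually.of_forall (excessRisk_nonneg hσ1 hσ2 hn))
    (hball.add (integrable_finsetSum _ fun j _ => hfar j))
    (Eventually.of_forall (excessRisk_le hσ1 hσ2 hn hρ hθ))
  simp only [Pi.add_apply] at hbound
  rw [integral_add hball (integrable_finsetSum _ fun j _ => hfar j),
    integral_finsetSum _ fun j _ => hfar j,
    integral_indicator_const _ Metric.isClosed_closedBall.measurableSet,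
    volume_real_closedBall_prod 0 (by positivity)] at hbound
  simp_rw [integral_const_mul, integral_sub_right_eq_self
    (fun w => {w : ℝ × ℝ | B < ‖w‖}.indicator W w), integral_indicator htail] at hbound
  simp only [Finset.sum_const, Finset.card_univ, Fintype.card_fin, nsmul_eq_mul,
    smul_eq_mul] at hbound
  have hn' : (0 : ℝ) < n := Nat.cast_pos.2 hn
  rw [riskR_fstarReg_sub_riskR_fstar hσ1 hσ2 hn hρ hθ, inv_mul_le_iff₀ hn']
  calc ∫ x, excessRisk n σ1 σ2 ρ θ x ≤ _ := hbound
    _ = _ := by field_simp; ring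

end Risk

/-- Under `|θ_{id}| ≤ C n^{1/4 − η}`, the regularized oracle rule `δ*_ρ` satisfies
`lim_{n→∞} [R_n(θ, δ*_ρ) − R_n(θ, δ*)] = 0`. -/
theorem stmt5 (σ1 σ2 ρ C η : ℝ) (hσ1 : 0 < σ1) (hσ2 : 0 < σ2) (hρ : 0 < ρ)
    (hC : 0 < C) (hη : 0 < η)
    (θ : (n : ℕ) → Fin n → Fin 2 → ℝ)
    (hθ : ∀ (n : ℕ) (i : Fin n) (d : Fin 2),
      |θ n i d| ≤ C * (n : ℝ) ^ ((1 : ℝ) / 4 - η)) :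
    Tendsto (fun n : ℕ =>
        riskR n σ1 σ2 (θ n) (fstarReg n σ1 σ2 ρ (θ n)) -
          riskR n σ1 σ2 (θ n) (fstar n σ1 σ2 (θ n)))
      atTop (nhds 0) := by
  set a := (1 : ℝ) / 4 - min η (1 / 8) with ha_def
  have ha : 0 < a := by linarith [min_le_right η (1 / 8)]
  have ha' : a < 1 / 4 := by linarith [lt_min hη (show (0 : ℝ) < 1 / 8 by norm_num)]
  have hθB : ∀ n, 0 < n → ∀ i d, |θ n i d| ≤ C * (n : ℝ) ^ a := fun n hn i d =>
    (hθ n i d).trans <| mul_le_mul_of_nonneg_left (rpow_le_rpow_of_exponent_le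
      (Nat.one_le_cast.2 hn) (by linarith [min_le_left η (1 / 8)])) hC.le
  have hB : Tendsto (fun n : ℕ => C * (n : ℝ) ^ a) atTop atTop :=
    ((tendsto_rpow_atTop ha).comp tendsto_natCast_atTop_atTop).const_mul_atTop hC
  have hbulk := (tendsto_mul_rpow_pow_four_div ha' C).const_mul (36 * ρ)
  have htail := ((tendsto_setIntegral_lt_norm (integrable_sq_add_sq_mul_pdens hσ1 hσ2)).comp
    hB).const_mul 10
  rw [mul_zero] at hbulk htail
  refine tendsto_of_tendsto_of_tendsto_of_le_of_le' tendsto_const_nhds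
    (by simpa using hbulk.add htail) ?_ ?_
  · filter_upwards [eventually_gt_atTop 0] with n hn using
      riskR_fstarReg_sub_riskR_fstar_nonneg hσ1 hσ2 hn hρ (hθB n hn)
  · filter_upwards [eventually_gt_atTop 0] with n hn
    refine (riskR_fstarReg_sub_riskR_fstar_le hσ1 hσ2 hn hρ (hθB n hn)).trans_eq ?_
    ring
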